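/- arXiv:1908.04021 — 3 statements merged into one kernel-verified Lean document; each statement's English description precedes it below -/
import Mathlib

section
/- For any matrix A ∈ ℝ^{3×3} with det A > 0, the Euclidean norm of T(A) = (AᵀA)^{1/2} − I equals the distance from A to SO(3), i.e. |T(A)| = dist(A, SO(3)) = inf_{Q ∈ SO(3)} |A − Q|. -/
open Matrix
open scoped Classical

noncomputable def fnorm (A : Matrix (Fin 3) (Fin 3) ℝ) : ℝ :=
  Real.sqrt ((Aᵀ * A).trace)

def SO3 : Set (Matrix (Fin 3) (Fin 3) ℝ) := {Q | Qᵀ * Q = 1 ∧ Q.det = 1}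

noncomputable def psdSqrt (M : Matrix (Fin 3) (Fin 3) ℝ) : Matrix (Fin 3) (Fin 3) ℝ :=
  if h : M.PosSemidef then
    (h.1.eigenvectorUnitary : Matrix (Fin 3) (Fin 3) ℝ) *
      diagonal (fun i => Real.sqrt (h.1.eigenvalues i)) *
      (star h.1.eigenvectorUnitary : Matrix (Fin 3) (Fin 3) ℝ)
  else 0

noncomputable def symM (B : Matrix (Fin 3) (Fin 3) ℝ) : Matrix (Fin 3) (Fin 3) ℝ :=
  (1/2 : ℝ) • (B + Bᵀ)

noncomputable def PhiM (B : Matrix (Fin 3) (Fin 3) ℝ) : Matrix (Fin 3) (Fin 3) ℝ :=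
  symM B + (1/2 : ℝ) • (Bᵀ * B)

noncomputable def TM (A : Matrix (Fin 3) (Fin 3) ℝ) : Matrix (Fin 3) (Fin 3) ℝ :=
  psdSqrt (Aᵀ * A) - 1

lemma trace_eq_sum' (X Y : Matrix (Fin 3) (Fin 3) ℝ) :
    (Xᵀ * Y).trace = ∑ p : Fin 3 × Fin 3, X p.2 p.1 * Y p.2 p.1 := by
  simp [Matrix.trace, Matrix.diag, Matrix.mul_apply, Fintype.sum_prod_type]

lemma trace_tsq_nonneg' (X : Matrix (Fin 3) (Fin 3) ℝ) : 0 ≤ (Xᵀ * X).trace := by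
  rw [trace_eq_sum']
  exact Finset.sum_nonneg fun p _ => mul_self_nonneg _

lemma trace_CS' (X Y : Matrix (Fin 3) (Fin 3) ℝ) :
    (Xᵀ * Y).trace ≤ Real.sqrt (Xᵀ * X).trace * Real.sqrt (Yᵀ * Y).trace := by
  rw [trace_eq_sum', trace_eq_sum', trace_eq_sum']
  have := Real.sum_mul_le_sqrt_mul_sqrt Finset.univ
    (fun p : Fin 3 × Fin 3 => X p.2 p.1) (fun p : Fin 3 × Fin 3 => Y p.2 p.1)
  simpa [sq] using this

lemma psdSqrt_spec (M : Matrix (Fin 3) (Fin 3) ℝ) (h : M.PosSemidef) :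
    (psdSqrt M).PosSemidef ∧ psdSqrt M * psdSqrt M = M := by
  set V : Matrix (Fin 3) (Fin 3) ℝ := (h.1.eigenvectorUnitary : Matrix (Fin 3) (Fin 3) ℝ) with hV
  set D : Matrix (Fin 3) (Fin 3) ℝ := diagonal (fun i => Real.sqrt (h.1.eigenvalues i)) with hD
  have e : psdSqrt M = V * D * star V := by rw [psdSqrt, dif_pos h]
  have hVV : star V * V = 1 := Unitary.coe_star_mul_self _
  have hDD : D * D = diagonal (fun i => (h.1.eigenvalues i : ℝ)) := by
    rw [hD, diagonal_mul_diagonal]; congr 1; funext i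
    exact Real.mul_self_sqrt (h.eigenvalues_nonneg i)
  constructor
  · rw [e]
    exact (posSemidef_diagonal_iff.mpr (fun i => Real.sqrt_nonneg _)).mul_mul_conjTranspose_same V
  · rw [e]
    calc V * D * star V * (V * D * star V) = V * D * (star V * V) * D * star V := by
          simp only [Matrix.mul_assoc]
      _ = V * (D * D) * star V := by rw [hVV]; simp only [Matrix.mul_one, Matrix.mul_assoc]
      _ = M := by
          rw [hDD]
          conv_rhs => rw [h.1.spectral_theorem]
          simp [hV]

/-- For A with det A > 0, |T(A)| = dist(A, SO(3)) = inf over Q ∈ SO(3) of |A − Q|. -/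
theorem stmt0 (A : Matrix (Fin 3) (Fin 3) ℝ) (hA : 0 < A.det) :
    fnorm (TM A) = ⨅ Q : SO3, fnorm (A - (Q : Matrix (Fin 3) (Fin 3) ℝ)) := by
  have hM : (Aᵀ * A).PosSemidef := by
    have := Matrix.posSemidef_conjTranspose_mul_self A
    rwa [Matrix.conjTranspose_eq_transpose_of_trivial] at this
  set U : Matrix (Fin 3) (Fin 3) ℝ := psdSqrt (Aᵀ * A) with hUdef
  have hU : U.PosSemidef := (psdSqrt_spec _ hM).1
  have hUsq : U * U = Aᵀ * A := (psdSqrt_spec _ hM).2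
  have hUsym : Uᵀ = U := by
    have h := hU.1
    rwa [Matrix.IsHermitian, Matrix.conjTranspose_eq_transpose_of_trivial] at h
  -- square root S of U
  set S : Matrix (Fin 3) (Fin 3) ℝ := psdSqrt U with hSdef
  have hSsq : S * S = U := (psdSqrt_spec U hU).2
  have hSsym : Sᵀ = S := by
    have h := (psdSqrt_spec U hU).1.1
    rwa [Matrix.IsHermitian, Matrix.conjTranspose_eq_transpose_of_trivial] at h
  have hdetU_nonneg : 0 ≤ U.det := by
    rw [← hSsq, Matrix.det_mul]; exact mul_self_nonneg _
  have hdetU : U.det = A.det := by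
    have h1 : U.det * U.det = A.det * A.det := by
      have := congrArg Matrix.det hUsq
      rwa [Matrix.det_mul, Matrix.det_mul, Matrix.det_transpose] at this
    nlinarith
  have hdetU_ne : U.det ≠ 0 := by rw [hdetU]; exact ne_of_gt hA
  have hUunit : IsUnit U.det := isUnit_iff_ne_zero.mpr hdetU_ne
  have hUinv : U * U⁻¹ = 1 := Matrix.mul_nonsing_inv U hUunit
  have hUinv' : U⁻¹ * U = 1 := Matrix.nonsing_inv_mul U hUunit
  set R : Matrix (Fin 3) (Fin 3) ℝ := A * U⁻¹ with hRdef
  have hRU : R * U = A := by rw [hRdef, Matrix.mul_assoc, hUinv', Matrix.mul_one]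
  have hRT : Rᵀ = U⁻¹ * Aᵀ := by
    rw [hRdef, Matrix.transpose_mul, Matrix.transpose_nonsing_inv, hUsym]
  have hRtR : Rᵀ * R = 1 := by
    rw [hRT, hRdef]
    calc U⁻¹ * Aᵀ * (A * U⁻¹) = U⁻¹ * (Aᵀ * A) * U⁻¹ := by
          rw [Matrix.mul_assoc, Matrix.mul_assoc, Matrix.mul_assoc]
      _ = U⁻¹ * (U * U) * U⁻¹ := by rw [hUsq]
      _ = (U⁻¹ * U) * (U * U⁻¹) := by
          rw [Matrix.mul_assoc, Matrix.mul_assoc, Matrix.mul_assoc]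
      _ = 1 := by rw [hUinv', hUinv, Matrix.mul_one]
  have hRdet : R.det = 1 := by
    rw [hRdef, Matrix.det_mul, Matrix.det_nonsing_inv, hdetU]
    exact Ring.mul_inverse_cancel _ (isUnit_iff_ne_zero.mpr (ne_of_gt hA))
  have hRmem : R ∈ SO3 := ⟨hRtR, hRdet⟩
  -- trace of U is nonnegative
  have htrU_nonneg : 0 ≤ U.trace := by
    have := trace_tsq_nonneg' S
    rwa [hSsym, hSsq] at this
  -- key inequality : for Q ∈ SO3, trace (Qᵀ * A) ≤ trace U
  have key : ∀ Q : Matrix (Fin 3) (Fin 3) ℝ, Q ∈ SO3 → (Qᵀ * A).trace ≤ U.trace := by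
    intro Q hQ
    obtain ⟨hQ1, _⟩ := hQ
    have hQ2 : Q * Qᵀ = 1 := mul_eq_one_comm.mp hQ1
    set P : Matrix (Fin 3) (Fin 3) ℝ := Qᵀ * R with hPdef
    have hPtP : Pᵀ * P = 1 := by
      rw [hPdef, Matrix.transpose_mul, Matrix.transpose_transpose]
      calc Rᵀ * Q * (Qᵀ * R) = Rᵀ * (Q * Qᵀ) * R := by
            rw [Matrix.mul_assoc, Matrix.mul_assoc, Matrix.mul_assoc]
        _ = 1 := by rw [hQ2, Matrix.mul_one, hRtR]
    have hSS : Sᵀ * S = U := by rw [hSsym, hSsq]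
    have h1 : (Qᵀ * A).trace = (Sᵀ * (P * S)).trace := by
      rw [hSsym, ← hRU, ← Matrix.mul_assoc, ← hPdef, ← hSsq, ← Matrix.mul_assoc,
        Matrix.trace_mul_comm (P * S) S, Matrix.mul_assoc]
    have e2 : (P * S)ᵀ * (P * S) = Sᵀ * (Pᵀ * P) * S := by
      rw [Matrix.transpose_mul]; noncomm_ring
    have h2 : (P * S)ᵀ * (P * S) = U := by rw [e2, hPtP, Matrix.mul_one, hSS]
    have h3 := trace_CS' S (P * S)
    rw [hSS, h2] at h3
    rw [h1]
    calc (Sᵀ * (P * S)).trace ≤ Real.sqrt U.trace * Real.sqrt U.trace := h3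
      _ = U.trace := Real.mul_self_sqrt htrU_nonneg
  -- trace expansions
  have htr1 : ((U - 1)ᵀ * (U - 1)).trace = (Aᵀ * A).trace - 2 * U.trace + 3 := by
    have : (U - 1)ᵀ * (U - 1) = U * U - U - U + 1 := by
      rw [Matrix.transpose_sub, hUsym, Matrix.transpose_one]
      noncomm_ring
    rw [this, Matrix.trace_add, Matrix.trace_sub, Matrix.trace_sub, hUsq, Matrix.trace_one]
    simp [Fintype.card_fin]; ring
  have htr2 : ∀ Q : Matrix (Fin 3) (Fin 3) ℝ, Q ∈ SO3 →
      ((A - Q)ᵀ * (A - Q)).trace = (Aᵀ * A).trace - 2 * (Qᵀ * A).trace + 3 := by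
    intro Q hQ
    have hexp : (A - Q)ᵀ * (A - Q) = Aᵀ * A - Aᵀ * Q - Qᵀ * A + Qᵀ * Q := by
      rw [Matrix.transpose_sub]; noncomm_ring
    have htrAQ : (Aᵀ * Q).trace = (Qᵀ * A).trace := by
      rw [← Matrix.trace_transpose (Aᵀ * Q), Matrix.transpose_mul, Matrix.transpose_transpose]
    rw [hexp, Matrix.trace_add, Matrix.trace_sub, Matrix.trace_sub, hQ.1, Matrix.trace_one,
      htrAQ]
    simp [Fintype.card_fin]; ring
  -- TM A = U - 1
  have hTM : TM A = U - 1 := by rw [TM, hUdef]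
  -- lower bound
  have hlb : ∀ Q : SO3, fnorm (TM A) ≤ fnorm (A - (Q : Matrix (Fin 3) (Fin 3) ℝ)) := by
    rintro ⟨Q, hQ⟩
    rw [hTM, fnorm, fnorm]
    apply Real.sqrt_le_sqrt
    rw [htr1, htr2 Q hQ]
    have := key Q hQ
    linarith
  -- the value is attained at R
  have hattain : fnorm (A - R) = fnorm (TM A) := by
    have hAR : A - R = R * (U - 1) := by
      rw [Matrix.mul_sub, hRU, Matrix.mul_one]
    have e : (R * (U - 1))ᵀ * (R * (U - 1)) = (U - 1)ᵀ * (Rᵀ * R) * (U - 1) := by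
      rw [Matrix.transpose_mul]; noncomm_ring
    rw [hTM, fnorm, fnorm, hAR, e, hRtR, Matrix.mul_one]
  -- conclude
  have hne : Nonempty SO3 := ⟨⟨R, hRmem⟩⟩
  apply le_antisymm
  · exact le_ciInf hlb
  · have hbdd : BddBelow (Set.range fun Q : SO3 => fnorm (A - (Q : Matrix (Fin 3) (Fin 3) ℝ))) := by
      refine ⟨0, ?_⟩
      rintro x ⟨Q, rfl⟩
      exact Real.sqrt_nonneg _
    exact ciInf_le_of_le hbdd ⟨R, hRmem⟩ (le_of_eq hattain)
end

section
/- Let L : V → V be a self-adjoint operator on a 2-dimensional real inner product space with eigenvalues λ₁ > 0 > λ₂ and orthonormal eigenbasis (e₁, e₂). Let ξ ∈ V satisfy λ₁⟨ξ,e₂⟩² + λ₂⟨ξ,e₁⟩² = 0, let Z = ⟨ξ,e₁⟩e₁ − ⟨ξ,e₂⟩e₂, and let v = (⟨ξ,e₁⟩² + ⟨ξ,e₂⟩²)/(λ₁ − λ₂). Then the symmetric part of the bilinear form (α,β) ↦ ⟨Z,α⟩⟨ξ,β⟩ equals v times the bilinear form (α,β) ↦ ⟨Lα,β⟩; that is,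 (1/2)(⟨Z,α⟩⟨ξ,β⟩ + ⟨Z,β⟩⟨ξ,α⟩) = v⟨Lα,β⟩ for all α, β ∈ V. -/
open scoped RealInnerProductSpace

theorem OrthonormalBasis.inner_apply_eq_sum_of_apply_eq_smul {V ι : Type*}
    [NormedAddCommGroup V] [InnerProductSpace ℝ V] [Fintype ι]
    (e : OrthonormalBasis ι ℝ V) {L : V →ₗ[ℝ] V} {μ : ι → ℝ} (hL : ∀ i, L (e i) = μ i • e i)
    (α β : V) : ⟪L α, β⟫ = ∑ i, μ i * ⟪e i, α⟫ * ⟪e i, β⟫ := by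
  conv_lhs => rw [← e.sum_repr' α]
  simp [map_sum, hL, sum_inner, real_inner_smul_left, smul_smul, mul_comm]

/-- The left side is `x0² a0 b0 - x1² a1 b1`, and the null condition makes `(x0², -x1²)`
proportional to `(l1, l2)`, with factor `(x0² + x1²) / (l1 - l2)`. -/
theorem sym_mul_eq_div_mul_of_null {l1 l2 x0 x1 : ℝ} (hl : l1 ≠ l2)
    (hξ : l1 * x1 ^ 2 + l2 * x0 ^ 2 = 0) (a0 a1 b0 b1 : ℝ) :
    (1 / 2) * ((x0 * a0 - x1 * a1) * (x0 * b0 + x1 * b1)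
        + (x0 * b0 - x1 * b1) * (x0 * a0 + x1 * a1))
      = (x0 ^ 2 + x1 ^ 2) / (l1 - l2) * (l1 * a0 * b0 + l2 * a1 * b1) := by
  have : l1 - l2 ≠ 0 := sub_ne_zero.mpr hl
  field_simp
  linear_combination (-2 * a0 * b0 - 2 * a1 * b1) * hξ

theorem stmt8_general {V : Type*} [NormedAddCommGroup V] [InnerProductSpace ℝ V]
    (e : OrthonormalBasis (Fin 2) ℝ V) (L : V →ₗ[ℝ] V)
    (l1 l2 : ℝ) (hl1 : 0 < l1) (hl2 : l2 < 0)
    (he1 : L (e 0) = l1 • e 0) (he2 : L (e 1) = l2 • e 1)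
    (ξ : V) (hξ : l1 * ⟪ξ, e 1⟫ ^ 2 + l2 * ⟪ξ, e 0⟫ ^ 2 = 0)
    (Z : V) (hZ : Z = ⟪ξ, e 0⟫ • e 0 - ⟪ξ, e 1⟫ • e 1)
    (v : ℝ) (hv : v = (⟪ξ, e 0⟫ ^ 2 + ⟪ξ, e 1⟫ ^ 2) / (l1 - l2)) :
    ∀ α β : V, (1 / 2) * (⟪Z, α⟫ * ⟪ξ, β⟫ + ⟪Z, β⟫ * ⟪ξ, α⟫) = v * ⟪L α, β⟫ := by
  intro α β
  have hL : ⟪L α, β⟫ = l1 * ⟪e 0, α⟫ * ⟪e 0, β⟫ + l2 * ⟪e 1, α⟫ * ⟪e 1, β⟫ := by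
    rw [e.inner_apply_eq_sum_of_apply_eq_smul (μ := ![l1, l2])
      (Fin.forall_fin_two.mpr ⟨he1, he2⟩), Fin.sum_univ_two]
    rfl
  have hZ' (w : V) : ⟪Z, w⟫ = ⟪ξ, e 0⟫ * ⟪e 0, w⟫ - ⟪ξ, e 1⟫ * ⟪e 1, w⟫ := by
    simp only [hZ, inner_sub_left, real_inner_smul_left]
  have hξ' (w : V) : ⟪ξ, w⟫ = ⟪ξ, e 0⟫ * ⟪e 0, w⟫ + ⟪ξ, e 1⟫ * ⟪e 1, w⟫ := by
    rw [← e.sum_inner_mul_inner, Fin.sum_univ_two]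
  rw [hL, hZ', hZ', hξ' α, hξ' β, hv]
  exact sym_mul_eq_div_mul_of_null (by linarith) hξ _ _ _ _

theorem stmt8 {V : Type*} [NormedAddCommGroup V] [InnerProductSpace ℝ V]
    (e : OrthonormalBasis (Fin 2) ℝ V) (L : V →ₗ[ℝ] V)
    (hsym : ∀ x y : V, ⟪L x, y⟫ = ⟪x, L y⟫)
    (l1 l2 : ℝ) (hl1 : 0 < l1) (hl2 : l2 < 0)
    (he1 : L (e 0) = l1 • e 0) (he2 : L (e 1) = l2 • e 1)
    (ξ : V) (hξ : l1 * ⟪ξ, e 1⟫ ^ 2 + l2 * ⟪ξ, e 0⟫ ^ 2 = 0)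
    (Z : V) (hZ : Z = ⟪ξ, e 0⟫ • e 0 - ⟪ξ, e 1⟫ • e 1)
    (v : ℝ) (hv : v = (⟪ξ, e 0⟫ ^ 2 + ⟪ξ, e 1⟫ ^ 2) / (l1 - l2)) :
    ∀ α β : V, (1 / 2) * (⟪Z, α⟫ * ⟪ξ, β⟫ + ⟪Z, β⟫ * ⟪ξ, α⟫) = v * ⟪L α, β⟫ :=
  stmt8_general e L l1 l2 hl1 hl2 he1 he2 ξ hξ Z hZ v hv
end

section
/- Let X, Y be vector fields on a Riemannian 2-manifold with |X| = |Y| = 1, ⟨X, Y⟩ = 0, and suppose ⟨D_X Y, X⟩ = 0 (equivalently D_X X = 0 in the surface). Define η along the flow of X by η(γ(t)) = exp(∫₀ᵗ ⟨D_Y X, Y⟩(γ(s)) ds), where γ is an integral curve of X. Then the Lie bracket satisfies [X, ηY] = (X(η) − η⟨D_Y X, Y⟩) Y; in particular [X, ηY] = 0. -/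
open scoped RealInnerProductSpace

/-- The commuting-frame identity [X, ηY] = (X(η) − η⟨D_Y X, Y⟩) Y = 0 for an
orthonormal frame (X, Y) on a 2-dimensional domain, where the covariant derivative
D_A B at p is fderiv B p (A p) and the Lie bracket is [A,B] = D_A B − D_B A. -/
theorem stmt18
    (X Y : EuclideanSpace ℝ (Fin 2) → EuclideanSpace ℝ (Fin 2))
    (η : EuclideanSpace ℝ (Fin 2) → ℝ)
    (hXd : Differentiable ℝ X) (hYd : Differentiable ℝ Y) (hηd : Differentiable ℝ η)
    (hX1 : ∀ p, ‖X p‖ = 1) (hY1 : ∀ p, ‖Y p‖ = 1) (hXY : ∀ p, ⟪X p, Y p⟫ = 0)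
    -- ⟨D_X Y, X⟩ = 0 (equivalently D_X X = 0 on the surface)
    (hDXY : ∀ p, ⟪fderiv ℝ Y p (X p), X p⟫ = 0)
    -- η satisfies X(η) = η ⟨D_Y X, Y⟩, the derivative form of
    -- η(γ(t)) = exp(∫₀ᵗ ⟨D_Y X, Y⟩(γ(s)) ds) along integral curves of X
    (hη : ∀ p, fderiv ℝ η p (X p) = η p * ⟪fderiv ℝ X p (Y p), Y p⟫) :
    ∀ p,
      fderiv ℝ (fun q => η q • Y q) p (X p) - fderiv ℝ X p (η p • Y p) =
        (fderiv ℝ η p (X p) - η p * ⟪fderiv ℝ X p (Y p), Y p⟫) • Y p ∧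
      fderiv ℝ (fun q => η q • Y q) p (X p) - fderiv ℝ X p (η p • Y p) = 0 := by
  intro p
  have hXX : ∀ q, ⟪X q, X q⟫ = (1 : ℝ) := fun q => by
    rw [real_inner_self_eq_norm_sq, hX1 q]; norm_num
  have hYY : ∀ q, ⟪Y q, Y q⟫ = (1 : ℝ) := fun q => by
    rw [real_inner_self_eq_norm_sq, hY1 q]; norm_num
  have h1 : ∀ v, ⟪fderiv ℝ X p v, X p⟫ = 0 := by
    intro v
    have hc : (fun q => ⟪X q, X q⟫) = fun _ => (1 : ℝ) := funext fun q => hXX q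
    have h := fderiv_inner_apply (𝕜 := ℝ) (hXd p) (hXd p) v
    rw [hc] at h
    simp only [fderiv_fun_const, Pi.zero_apply, ContinuousLinearMap.zero_apply] at h
    have hcomm := real_inner_comm (X p) (fderiv ℝ X p v)
    linarith
  have h2 : ∀ v, ⟪fderiv ℝ Y p v, Y p⟫ = 0 := by
    intro v
    have hc : (fun q => ⟪Y q, Y q⟫) = fun _ => (1 : ℝ) := funext fun q => hYY q
    have h := fderiv_inner_apply (𝕜 := ℝ) (hYd p) (hYd p) v
    rw [hc] at h
    simp only [fderiv_fun_const, Pi.zero_apply, ContinuousLinearMap.zero_apply] at h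
    have hcomm := real_inner_comm (Y p) (fderiv ℝ Y p v)
    linarith
  have h3 : ∀ v, ⟪X p, fderiv ℝ Y p v⟫ + ⟪fderiv ℝ X p v, Y p⟫ = 0 := by
    intro v
    have hc : (fun q => ⟪X q, Y q⟫) = fun _ => (0 : ℝ) := funext fun q => hXY q
    have h := fderiv_inner_apply (𝕜 := ℝ) (hXd p) (hYd p) v
    rw [hc] at h
    simp only [fderiv_fun_const, Pi.zero_apply, ContinuousLinearMap.zero_apply] at h
    linarith
  have hYX : ⟪Y p, X p⟫ = 0 := by rw [real_inner_comm]; exact hXY p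
  have hON : Orthonormal ℝ ![X p, Y p] := by
    refine ⟨fun i => ?_, fun i j hij => ?_⟩
    · fin_cases i
      · simpa using hX1 p
      · simpa using hY1 p
    · fin_cases i <;> fin_cases j
      · exact absurd rfl hij
      · simpa using hXY p
      · simpa using hYX
      · exact absurd rfl hij
  have key : ∀ v : EuclideanSpace ℝ (Fin 2), ⟪v, X p⟫ = 0 → ⟪v, Y p⟫ = 0 → v = 0 := by
    intro v hv1 hv2
    have hspan : Submodule.span ℝ (Set.range ![X p, Y p]) = ⊤ :=
      hON.linearIndependent.span_eq_top_of_card_eq_finrank (by simp)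
    have hrange : Set.range ![X p, Y p] = {X p, Y p} := by
      simp [Matrix.range_cons, Matrix.range_empty, Set.pair_comm]
    have hv : v ∈ Submodule.span ℝ ({X p, Y p} : Set (EuclideanSpace ℝ (Fin 2))) := by
      rw [← hrange, hspan]; trivial
    obtain ⟨a, b, hab⟩ := Submodule.mem_span_pair.mp hv
    have hz : ⟪v, v⟫ = 0 := by
      nth_rewrite 1 [← hab]
      rw [inner_add_left, real_inner_smul_left, real_inner_smul_left,
        real_inner_comm v (X p), real_inner_comm v (Y p), hv1, hv2]
      ring
    exact inner_self_eq_zero.mp hz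
  set A := fderiv ℝ Y p (X p) with hAdef
  set B := fderiv ℝ X p (Y p) with hBdef
  have hA : A = 0 := key A (hDXY p) (h2 (X p))
  have hB : B = ⟪B, Y p⟫ • Y p := by
    have h0 : B - ⟪B, Y p⟫ • Y p = 0 := by
      apply key
      · rw [inner_sub_left, real_inner_smul_left, h1 (Y p), hYX]
        ring
      · rw [inner_sub_left, real_inner_smul_left, hYY p]
        ring
    exact sub_eq_zero.mp h0
  have hder : fderiv ℝ (fun q => η q • Y q) p (X p)
      = fderiv ℝ η p (X p) • Y p + η p • A := by
    rw [fderiv_fun_smul (hηd p) (hYd p)]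
    simp [ContinuousLinearMap.add_apply, add_comm, hAdef]
  have hlin : fderiv ℝ X p (η p • Y p) = η p • B := by
    rw [map_smul]
  have main : fderiv ℝ (fun q => η q • Y q) p (X p) - fderiv ℝ X p (η p • Y p) =
      (fderiv ℝ η p (X p) - η p * ⟪fderiv ℝ X p (Y p), Y p⟫) • Y p := by
    rw [hder, hlin, hA, smul_zero, add_zero]
    conv_lhs => rw [hB]
    rw [smul_smul, sub_smul, mul_smul, smul_smul]
  refine ⟨main, ?_⟩
  rw [main, hη p]
  simp
end
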